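/- arXiv:1807.01107 — 2 statements merged into one kernel-verified Lean document; each statement's English description precedes it below -/
import Mathlib

section
/- Let G be a p-group with cyclic center and rank at least 2, and let K ⊴ G with K ≅ C_p × C_p. If A₁,…,A_p are the subgroups of K of order p that are not central in G, then all Aᵢ are conjugate in G, C_G(K) = C_G(Aᵢ) for each i, and C_G(K) has index p in G. -/
/-!
In a `p`-group a normal subgroup meets the centre, so a normal subgroup of order `p` is central.
As `Z(G)` is cyclic, `K` is not central; hence `Z := K ⊓ Z(G)` has order `p` and the image of `K`
in `G ⧸ Z(G)` is normal of order `p`, thus central: every commutator `⁅g, k⁆` with `k ∈ K` lies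
in `Z`. For `a ∈ K \ Z` the map `g ↦ ⁅g, a⁆` is then a homomorphism `G → Z`, onto because `a` is
not central, with kernel `C_G(a)`. So `C_G(a)` has index `p`; it equals `C_G(K)` because
`K = ⟨a⟩ Z`; and the conjugates of `a` are exactly `a Z`, which meets every noncentral subgroup of
order `p` of `K`.
-/

open Subgroup
open scoped commutatorElement

section

variable {G : Type*} [Group G]

theorem Subgroup.eq_of_le_of_card_eq_prime {p : ℕ} (hp : p.Prime) {H N : Subgroup G}
    (hHN : H ≤ N) (hN : Nat.card N = p) (hH : H ≠ ⊥) : H = N := by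
  have : Finite N := Nat.finite_of_card_ne_zero (hN ▸ hp.ne_zero)
  rcases (Nat.dvd_prime hp).1 (hN ▸ card_dvd_of_le hHN) with h | h
  · exact absurd (card_eq_one.1 h) hH
  · exact eq_of_le_of_card_ge hHN (hN ▸ h.ge)

theorem Subgroup.zpowers_eq_of_card_eq_prime {p : ℕ} (hp : p.Prime) {C : Subgroup G} {c : G}
    (hcC : c ∈ C) (hc : c ≠ 1) (hC : Nat.card C = p) : zpowers c = C :=
  eq_of_le_of_card_eq_prime hp (zpowers_le.2 hcC) hC (zpowers_ne_bot.2 hc)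

theorem Subgroup.eq_of_lt_of_le_of_card_eq_sq {p : ℕ} (hp : p.Prime) {Z H K : Subgroup G}
    (hZH : Z < H) (hHK : H ≤ K) (hZ : Nat.card Z = p) (hK : Nat.card K = p ^ 2) : H = K := by
  have : Finite K := Nat.finite_of_card_ne_zero (hK ▸ pow_ne_zero 2 hp.ne_zero)
  have : Finite H := Finite.of_injective _ (inclusion_injective hHK)
  obtain ⟨i, hi, hH⟩ := (Nat.dvd_prime_pow hp).1 (hK ▸ card_dvd_of_le hHK)
  interval_cases i
  · exact absurd (card_eq_one.1 hH ▸ hZH) not_lt_bot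
  · exact absurd (eq_of_le_of_card_ge hZH.le (by rw [hH, hZ, pow_one])) hZH.ne
  · exact eq_of_le_of_card_ge hHK (by rw [hH, hK])

def commutatorElementHom (a : G) (ha : ∀ g : G, ⁅g, a⁆ ∈ center G) : G →* G where
  toFun g := ⁅(g : G), a⁆
  map_one' := commutatorElement_one_left a
  map_mul' g h := by
    have hc := mem_center_iff.1 (ha h)
    calc ⁅g * h, a⁆ = g * ⁅h, a⁆ * (a * g⁻¹ * a⁻¹) := by simp only [commutatorElement_def]; group
      _ = ⁅h, a⁆ * ⁅g, a⁆ := by rw [hc g, mul_assoc, commutatorElement_def g]; group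
      _ = ⁅g, a⁆ * ⁅h, a⁆ := (hc _).symm

theorem ker_commutatorElementHom (a : G) (ha : ∀ g : G, ⁅g, a⁆ ∈ center G) :
    (commutatorElementHom a ha).ker = centralizer {a} := by
  ext g
  rw [MonoidHom.mem_ker, mem_centralizer_singleton_iff]
  exact commutatorElement_eq_one_iff_mul_comm

end

theorem ZMod.not_isAddCyclic_prod_self {n : ℕ} [NeZero n] (hn : n ≠ 1) :
    ¬ IsAddCyclic (ZMod n × ZMod n) := fun _ =>
  hn ((Nat.coprime_self n).1 (by simpa using coprime_card_of_isAddCyclic_prod (ZMod n) (ZMod n)))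

namespace IsPGroup

variable {p : ℕ} [Fact p.Prime] {G : Type*} [Group G]

theorem inf_center_ne_bot (hG : IsPGroup p G) {N : Subgroup G} [N.Normal] [Finite N]
    (hN : p ∣ Nat.card N) : N ⊓ center G ≠ ⊥ := by
  obtain ⟨b, hb, hb1⟩ := (hG.of_equiv ConjAct.toConjAct)
    |>.exists_fixed_point_of_prime_dvd_card_of_fixed_point N hN (a := 1) (fun g => smul_one g)
  refine ne_bot_iff_exists_ne_one.2 ⟨⟨b, b.2, mem_center_iff.2 fun g => ?_⟩, ?_⟩
  · have := congrArg Subtype.val (hb (ConjAct.toConjAct g))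
    rwa [ConjAct.Subgroup.val_conj_smul, ConjAct.smul_def, ConjAct.ofConjAct_toConjAct,
      mul_inv_eq_iff_eq_mul] at this
  · exact fun h => hb1 (Subtype.ext (congrArg Subtype.val h).symm)

theorem le_center_of_card_eq (hG : IsPGroup p G) {N : Subgroup G} [N.Normal]
    (hN : Nat.card N = p) : N ≤ center G := by
  have : Finite N := Nat.finite_of_card_ne_zero (hN ▸ (Fact.out : p.Prime).ne_zero)
  exact inf_eq_left.1 (eq_of_le_of_card_eq_prime Fact.out inf_le_left hN
    (hG.inf_center_ne_bot (hN ▸ dvd_rfl)))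

section

variable {K : Subgroup G} [K.Normal]

theorem card_inf_center_eq (hG : IsPGroup p G) (hK : Nat.card K = p ^ 2)
    (hKZ : ¬ K ≤ center G) : Nat.card (K ⊓ center G : Subgroup G) = p := by
  have hp : p.Prime := Fact.out
  have : Finite K := Nat.finite_of_card_ne_zero (hK ▸ pow_ne_zero 2 hp.ne_zero)
  obtain ⟨i, hi, hZ⟩ := (Nat.dvd_prime_pow hp).1 (hK ▸ card_dvd_of_le (inf_le_left (b := center G)))
  interval_cases i
  · exact absurd (card_eq_one.1 hZ) (hG.inf_center_ne_bot (hK ▸ dvd_pow_self p two_ne_zero))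
  · exact hZ.trans (pow_one p)
  · exact absurd (inf_eq_left.1 (eq_of_le_of_card_ge inf_le_left (by rw [hZ, hK]))) hKZ

theorem commutatorElement_mem_center (hG : IsPGroup p G) (hK : Nat.card K = p ^ 2)
    (hKZ : ¬ K ≤ center G) {k : G} (hk : k ∈ K) (g : G) : ⁅g, k⁆ ∈ center G := by
  set π := QuotientGroup.mk' (center G)
  have : (K.map π).Normal := Normal.map ‹_› π (QuotientGroup.mk'_surjective _)
  have hcard : Nat.card (K.map π) = p := by
    have h := relIndex_inf_mul_relIndex ⊥ (center G) K
    rw [relIndex_bot_left, bot_inf_eq, relIndex_bot_left, inf_comm, hG.card_inf_center_eq hK hKZ,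
      hK, pow_two] at h
    rw [← relIndex_ker, QuotientGroup.ker_mk']
    exact Nat.eq_of_mul_eq_mul_left (Fact.out : p.Prime).pos h
  have hcentral := mem_center_iff.1 ((hG.to_quotient _).le_center_of_card_eq hcard ⟨k, hk, rfl⟩)
  rw [← QuotientGroup.ker_mk' (center G), MonoidHom.mem_ker, map_commutatorElement,
    commutatorElement_eq_one_iff_mul_comm]
  exact hcentral (π g)

theorem range_commutatorElementHom (hG : IsPGroup p G) (hK : Nat.card K = p ^ 2)
    (hKZ : ¬ K ≤ center G) {a : G} (haK : a ∈ K) (haZ : a ∉ center G) :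
    (commutatorElementHom a (hG.commutatorElement_mem_center hK hKZ haK)).range =
      K ⊓ center G := by
  refine eq_of_le_of_card_eq_prime Fact.out ?_ (hG.card_inf_center_eq hK hKZ) ?_
  · rintro _ ⟨g, rfl⟩
    exact ⟨mul_mem (Normal.conj_mem ‹_› a haK g) (K.inv_mem haK),
      hG.commutatorElement_mem_center hK hKZ haK g⟩
  · refine fun h => haZ (mem_center_iff.2 fun g => ?_)
    have : ⁅g, a⁆ = 1 := mem_bot.1 (h ▸ MonoidHom.mem_range.2 ⟨g, rfl⟩)
    exact commutatorElement_eq_one_iff_mul_comm.1 this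

theorem index_centralizer_singleton (hG : IsPGroup p G) (hK : Nat.card K = p ^ 2)
    (hKZ : ¬ K ≤ center G) {a : G} (haK : a ∈ K) (haZ : a ∉ center G) :
    (centralizer {a}).index = p := by
  rw [← ker_commutatorElementHom a (hG.commutatorElement_mem_center hK hKZ haK), index_ker,
    hG.range_commutatorElementHom hK hKZ haK haZ, hG.card_inf_center_eq hK hKZ]

theorem exists_conj_eq_mul (hG : IsPGroup p G) (hK : Nat.card K = p ^ 2)
    (hKZ : ¬ K ≤ center G) {a z : G} (haK : a ∈ K) (haZ : a ∉ center G)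
    (hz : z ∈ K ⊓ center G) : ∃ g, g * a * g⁻¹ = a * z := by
  obtain ⟨g, hg⟩ :
      z ∈ (commutatorElementHom a (hG.commutatorElement_mem_center hK hKZ haK)).range :=
    hG.range_commutatorElementHom hK hKZ haK haZ ▸ hz
  refine ⟨g, ?_⟩
  calc g * a * g⁻¹ = ⁅g, a⁆ * a := by rw [commutatorElement_def]; group
    _ = a * z := by rw [show ⁅g, a⁆ = z from hg, mem_center_iff.1 (mem_inf.1 hz).2]

theorem centralizer_eq_centralizer_singleton (hG : IsPGroup p G) (hK : Nat.card K = p ^ 2)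
    (hKZ : ¬ K ≤ center G) {a : G} (haK : a ∈ K) (haZ : a ∉ center G) :
    centralizer (K : Set G) = centralizer {a} := by
  refine le_antisymm (centralizer_le (Set.singleton_subset_iff.2 haK)) (le_centralizer_iff.2 ?_)
  refine inf_eq_left.1 (eq_of_lt_of_le_of_card_eq_sq Fact.out (Z := K ⊓ center G) ?_ inf_le_left
    (hG.card_inf_center_eq hK hKZ) hK)
  refine SetLike.lt_iff_le_and_exists.2 ⟨inf_le_inf_left K (center_le_centralizer _),
    a, mem_inf.2 ⟨haK, Set.subset_centralizer_centralizer rfl⟩, fun h => haZ (mem_inf.1 h).2⟩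

theorem centralizer_eq_of_le_of_not_le_center (hG : IsPGroup p G) (hK : Nat.card K = p ^ 2)
    (hKZ : ¬ K ≤ center G) {A : Subgroup G} (hAK : A ≤ K) (hAZ : ¬ A ≤ center G) :
    centralizer (K : Set G) = centralizer (A : Set G) := by
  obtain ⟨a, haA, haZ⟩ := SetLike.not_le_iff_exists.1 hAZ
  refine le_antisymm (centralizer_le hAK) ?_
  rw [hG.centralizer_eq_centralizer_singleton hK hKZ (hAK haA) haZ]
  exact centralizer_le (Set.singleton_subset_iff.2 haA)

theorem exists_map_conj_eq (hG : IsPGroup p G) (hK : Nat.card K = p ^ 2)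
    (hKZ : ¬ K ≤ center G) {A B : Subgroup G} (hAK : A ≤ K) (hBK : B ≤ K)
    (hA : Nat.card A = p) (hB : Nat.card B = p) (hAZ : ¬ A ≤ center G) (hBZ : ¬ B ≤ center G) :
    ∃ g : G, A.map (MulAut.conj g).toMonoidHom = B := by
  obtain ⟨a, haA, haZ⟩ := SetLike.not_le_iff_exists.1 hAZ
  obtain ⟨b, hbB, hbZ⟩ := SetLike.not_le_iff_exists.1 hBZ
  have hsup : A ⊔ (K ⊓ center G) = K := eq_of_lt_of_le_of_card_eq_sq Fact.out
    (SetLike.lt_iff_le_and_exists.2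
      ⟨le_sup_right, a, mem_sup_left haA, fun h => haZ (mem_inf.1 h).2⟩)
    (sup_le hAK inf_le_left) (hG.card_inf_center_eq hK hKZ) hK
  obtain ⟨c, hcA, z, hz, rfl⟩ := mem_sup_of_normal_right.1 (hsup ▸ hBK hbB)
  have hcZ : c ∉ center G := fun hc => hbZ (mul_mem hc (mem_inf.1 hz).2)
  obtain ⟨g, hg⟩ := hG.exists_conj_eq_mul hK hKZ (hAK hcA) hcZ hz
  refine ⟨g, ?_⟩
  have ne_one {x : G} (hx : x ∉ center G) : x ≠ 1 := fun h => hx (h ▸ one_mem _)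
  rw [← zpowers_eq_of_card_eq_prime Fact.out hcA (ne_one hcZ) hA,
    ← zpowers_eq_of_card_eq_prime Fact.out hbB (ne_one hbZ) hB, MonoidHom.map_zpowers]
  exact congrArg zpowers hg

end

end IsPGroup

theorem noncentral_subgroups_of_normal_CpCp_general
    (p : ℕ) [Fact p.Prime] (G : Type*) [Group G]
    (hG : IsPGroup p G) (hZcyc : IsCyclic (Subgroup.center G))
    (K : Subgroup G) (hKnorm : K.Normal)
    (hK : Nonempty (K ≃* Multiplicative (ZMod p × ZMod p))) :
    (∀ A₁ A₂ : Subgroup G, A₁ ≤ K → A₂ ≤ K → Nat.card A₁ = p → Nat.card A₂ = p →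
      ¬ A₁ ≤ Subgroup.center G → ¬ A₂ ≤ Subgroup.center G →
      ∃ g : G, Subgroup.map (MulAut.conj g).toMonoidHom A₁ = A₂) ∧
    (∀ A : Subgroup G, A ≤ K → Nat.card A = p → ¬ A ≤ Subgroup.center G →
      Subgroup.centralizer (K : Set G) = Subgroup.centralizer (A : Set G)) ∧
    (Subgroup.centralizer (K : Set G)).index = p := by
  obtain ⟨e⟩ := hK
  have hcard : Nat.card K = p ^ 2 := by
    rw [Nat.card_congr e.toEquiv, Nat.card_congr Multiplicative.toAdd, Nat.card_prod,
      Nat.card_zmod, sq]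
  have hKZ : ¬ K ≤ center G := fun h =>
    ZMod.not_isAddCyclic_prod_self (Fact.out : p.Prime).ne_one <| isCyclic_multiplicative_iff.1 <|
      e.isCyclic.1 (isCyclic_of_injective (inclusion h) (inclusion_injective h))
  obtain ⟨a, haK, haZ⟩ := SetLike.not_le_iff_exists.1 hKZ
  refine ⟨fun _ _ => hG.exists_map_conj_eq hcard hKZ,
    fun _ hAK _ => hG.centralizer_eq_of_le_of_not_le_center hcard hKZ hAK, ?_⟩
  rw [hG.centralizer_eq_centralizer_singleton hcard hKZ haK haZ]
  exact hG.index_centralizer_singleton hcard hKZ haK haZ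

/-- Let `G` be a finite `p`-group with cyclic center and rank at least 2, and let
`K ⊴ G` with `K ≅ C_p × C_p`.  If `A₁, …, A_p` are the subgroups of `K` of order
`p` that are not central in `G`, then all `Aᵢ` are conjugate in `G`,
`C_G(K) = C_G(Aᵢ)` for each `i`, and `C_G(K)` has index `p` in `G`. -/
theorem noncentral_subgroups_of_normal_CpCp
    (p : ℕ) [Fact p.Prime] (G : Type*) [Group G] [Fintype G]
    (hG : IsPGroup p G) (hZcyc : IsCyclic (Subgroup.center G))
    (hrank : ∃ E : Subgroup G,
      (∀ x ∈ E, x ^ p = 1) ∧ (∀ x ∈ E, ∀ y ∈ E, x * y = y * x) ∧ Nat.card E = p ^ 2)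
    (K : Subgroup G) (hKnorm : K.Normal)
    (hK : Nonempty (K ≃* Multiplicative (ZMod p × ZMod p))) :
    (∀ A₁ A₂ : Subgroup G, A₁ ≤ K → A₂ ≤ K → Nat.card A₁ = p → Nat.card A₂ = p →
      ¬ A₁ ≤ Subgroup.center G → ¬ A₂ ≤ Subgroup.center G →
      ∃ g : G, Subgroup.map (MulAut.conj g).toMonoidHom A₁ = A₂) ∧
    (∀ A : Subgroup G, A ≤ K → Nat.card A = p → ¬ A ≤ Subgroup.center G →
      Subgroup.centralizer (K : Set G) = Subgroup.centralizer (A : Set G)) ∧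
    (Subgroup.centralizer (K : Set G)).index = p :=
  noncentral_subgroups_of_normal_CpCp_general p G hG hZcyc K hKnorm hK
end

section
/- Let G be a finite p-group with cyclic center of order divisible by p, K = ⟨a,z⟩ ⊴ G with K ≅ C_p × C_p, z generating the central subgroup Z = K ∩ Z(G), and suppose c ∈ G satisfies [c,a] = z. Then aca⁻¹ = z⁻¹c; consequently, any two subgroups C, C' of order p contained in CZ and different from Z are conjugate in G. -/
/-!
Since `z = [c, a]` is central, conjugation by `a` sends `c` to `c z⁻¹` and fixes `z`, so
conjugation by `aᵏ` sends `c zⁱ` to `c z^(i - k)`. A subgroup `C` of order `p` of `⟨c⟩⟨z⟩` is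
generated by any nontrivial element `cᵐ zⁿ` of it; when `C ≠ ⟨z⟩` we have `cᵐ ≠ 1`, so `cᵐ`
generates `⟨c⟩` and a suitable power of `cᵐ zⁿ` has the form `c zⁱ`. Hence the subgroups in
question are exactly the `⟨c zⁱ⟩`, and powers of `a` permute them transitively.
-/

open scoped commutatorElement

theorem conj_eq_inv_mul_of_commutatorElement_eq {G : Type*} [Group G] {a c z : G}
    (h : ⁅c, a⁆ = z) : a * c * a⁻¹ = z⁻¹ * c := by
  rw [← h, commutatorElement_inv]
  exact conj_eq_commutatorElement_mul

namespace Subgroup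

variable {G : Type*} [Group G]

theorem eq_zpowers_of_card_eq_prime {p : ℕ} [hp : Fact p.Prime] {H : Subgroup G}
    (hH : Nat.card H = p) {x : G} (hx : x ∈ H) (hx1 : x ≠ 1) : H = zpowers x := by
  have : Finite H := Nat.finite_of_card_ne_zero (hH ▸ hp.out.ne_zero)
  have hdvd : Nat.card (zpowers x) ∣ p := hH ▸ card_dvd_of_le (zpowers_le.mpr hx)
  have hne : Nat.card (zpowers x) ≠ 1 := by
    rwa [Ne, card_eq_one, zpowers_eq_bot]
  refine (eq_of_le_of_card_ge (zpowers_le.mpr hx) ?_).symm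
  rw [hH, (Nat.dvd_prime hp.out).mp hdvd |>.resolve_left hne]

theorem normal_of_le_center {H : Subgroup G} (hH : H ≤ center G) : H.Normal :=
  ⟨fun n hn g => by rwa [mem_center_iff.mp (hH hn) g, mul_inv_cancel_right]⟩

theorem exists_zpow_mul_zpow_of_mem_sup {z c x : G} (hz : z ∈ center G)
    (hx : x ∈ zpowers c ⊔ zpowers z) : ∃ m n : ℤ, c ^ m * z ^ n = x := by
  have := normal_of_le_center (zpowers_le.mpr hz)
  obtain ⟨_, ⟨m, rfl⟩, _, ⟨n, rfl⟩, rfl⟩ := mem_sup_of_normal_right.mp hx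
  exact ⟨m, n, rfl⟩

theorem exists_eq_zpowers_mul_zpow {p : ℕ} [hp : Fact p.Prime] {z c : G} (hz : z ∈ center G)
    (hc : c ∉ center G) (hzord : orderOf z = p) (hcord : orderOf c = p) {C : Subgroup G}
    (hle : C ≤ zpowers c ⊔ zpowers z) (hcard : Nat.card C = p) (hne : C ≠ zpowers z) :
    ∃ i : ℤ, C = zpowers (c * z ^ i) := by
  have hCbot : C ≠ ⊥ := by
    rintro rfl
    exact hp.out.one_lt.ne (card_bot.symm.trans hcard)
  obtain ⟨w, hwC, hw1⟩ := C.bot_or_exists_ne_one.resolve_left hCbot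
  obtain ⟨m, n, rfl⟩ := exists_zpow_mul_zpow_of_mem_sup hz (hle hwC)
  have hCw := eq_zpowers_of_card_eq_prime hcard hwC hw1
  have hcm : c ^ m ≠ 1 := by
    intro h
    rw [h, one_mul] at hCw hw1
    have hZ : zpowers z = zpowers (z ^ n) :=
      eq_zpowers_of_card_eq_prime (by rw [Nat.card_zpowers, hzord]) (zpow_mem_zpowers z n) hw1
    exact hne (hCw.trans hZ.symm)
  obtain ⟨k, hk : (c ^ m) ^ k = c⟩ : c ∈ zpowers (c ^ m) := by
    rw [← eq_zpowers_of_card_eq_prime (by rw [Nat.card_zpowers, hcord]) (zpow_mem_zpowers c m) hcm]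
    exact mem_zpowers c
  have hpow : (c ^ m * z ^ n) ^ k = c * z ^ (n * k) := by
    rw [(Commute.zpow_right (mem_center_iff.mp hz (c ^ m)) n).mul_zpow, hk, zpow_mul]
  have hcz : c * z ^ (n * k) ≠ 1 := fun h =>
    hc ((mul_mem_cancel_right (zpow_mem hz _)).mp (h ▸ one_mem _))
  exact ⟨n * k, eq_zpowers_of_card_eq_prime hcard (hpow ▸ zpow_mem hwC k) hcz⟩

theorem notMem_center_of_commutatorElement_ne_one {a c : G} (h : ⁅c, a⁆ ≠ 1) :
    c ∉ center G := fun hc =>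
  h (commutatorElement_eq_one_iff_mul_comm.mpr (mem_center_iff.mp hc a).symm)

end Subgroup

namespace MulAut

variable {G : Type*} [Group G]

theorem zpow_apply_of_apply_eq_mul {f : MulAut G} {x y : G} (hx : f x = x * y) (hy : f y = y)
    (k : ℤ) : (f ^ k) x = x * y ^ k := by
  have hyk : ∀ k : ℤ, (f ^ k) y = y := fun k => by
    have := Equiv.Perm.zpow_apply_eq_self_of_apply_eq_self (f := toPerm G f) hy k
    rwa [← map_zpow] at this
  induction k using Int.induction_on with
  | zero => simp
  | succ k ih => rw [zpow_add_one, mul_apply, hx, map_mul, ih, hyk, zpow_add_one, mul_assoc]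
  | pred k ih =>
    have hx' : (f ^ (-(k : ℤ) - 1)) x = (f ^ (-(k : ℤ) - 1)) (f (x * y⁻¹)) := by
      rw [map_mul, hx, map_inv, hy, mul_inv_cancel_right]
    rw [hx', ← mul_apply, ← zpow_add_one, sub_add_cancel, map_mul, ih, map_inv, hyk,
      zpow_sub_one, mul_assoc]

theorem conj_zpow_mul_zpow {a c z : G} (hz : z ∈ Subgroup.center G) (h : a * c * a⁻¹ = z⁻¹ * c)
    (k i : ℤ) : conj (a ^ k) (c * z ^ i) = c * z ^ (i - k) := by
  have hfix : ∀ g, conj g z = z := fun g => by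
    rw [conj_apply, Subgroup.mem_center_iff.mp hz g, mul_inv_cancel_right]
  have hc : conj a c = c * z⁻¹ := by
    rw [conj_apply, h]
    exact (Subgroup.mem_center_iff.mp (inv_mem hz) c).symm
  rw [map_mul, map_zpow (conj (a ^ k)) z, hfix, map_zpow,
    zpow_apply_of_apply_eq_mul hc (by rw [map_inv, hfix]), inv_zpow', mul_assoc, ← zpow_add,
    neg_add_eq_sub]

end MulAut

theorem conj_relation_and_conjugacy_in_CZ_general
    (p : ℕ) [Fact p.Prime] (G : Type*) [Group G]
    (z a c : G) (hz : z ∈ Subgroup.center G) (hzord : orderOf z = p)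
    (hcord : orderOf c = p) (hcomm : c * a * c⁻¹ * a⁻¹ = z) :
    a * c * a⁻¹ = z⁻¹ * c ∧
      ∀ C C' : Subgroup G,
        C ≤ Subgroup.zpowers c ⊔ Subgroup.zpowers z →
        C' ≤ Subgroup.zpowers c ⊔ Subgroup.zpowers z →
        Nat.card C = p → Nat.card C' = p →
        C ≠ Subgroup.zpowers z → C' ≠ Subgroup.zpowers z →
        ∃ g : G, Subgroup.map (MulAut.conj g).toMonoidHom C = C' := by
  have hconj := conj_eq_inv_mul_of_commutatorElement_eq hcomm
  refine ⟨hconj, fun C C' hC hC' hcardC hcardC' hneC hneC' => ?_⟩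
  have hz1 : z ≠ 1 := by
    rintro rfl
    exact (Fact.out : p.Prime).ne_one (hzord.symm.trans orderOf_one)
  have hc := Subgroup.notMem_center_of_commutatorElement_ne_one (hcomm ▸ hz1)
  obtain ⟨i, rfl⟩ := Subgroup.exists_eq_zpowers_mul_zpow hz hc hzord hcord hC hcardC hneC
  obtain ⟨j, rfl⟩ := Subgroup.exists_eq_zpowers_mul_zpow hz hc hzord hcord hC' hcardC' hneC'
  refine ⟨a ^ (i - j), ?_⟩
  rw [MonoidHom.map_zpowers, MulEquiv.coe_toMonoidHom, MulAut.conj_zpow_mul_zpow hz hconj,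
    sub_sub_cancel]

/-- Let `G` be a finite `p`-group with cyclic center of order divisible by `p`,
`K = ⟨a,z⟩ ⊴ G` with `K ≅ C_p × C_p`, `z` generating the central subgroup
`Z = K ∩ Z(G)`, and suppose `c ∈ G` satisfies `[c,a] = z` (where
`[c,a] = cac⁻¹a⁻¹`).  Then `aca⁻¹ = z⁻¹c`; consequently, any two subgroups
`C, C'` of order `p` contained in `CZ = ⟨c⟩⟨z⟩` and different from `Z = ⟨z⟩` are
conjugate in `G`. -/
theorem conj_relation_and_conjugacy_in_CZ
    (p : ℕ) [Fact p.Prime] (G : Type*) [Group G] [Fintype G]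
    (hG : IsPGroup p G) (hZcyc : IsCyclic (Subgroup.center G))
    (z a c : G) (hz : z ∈ Subgroup.center G) (hzord : orderOf z = p)
    (hcord : orderOf c = p) (hcomm : c * a * c⁻¹ * a⁻¹ = z) :
    a * c * a⁻¹ = z⁻¹ * c ∧
      ∀ C C' : Subgroup G,
        C ≤ Subgroup.zpowers c ⊔ Subgroup.zpowers z →
        C' ≤ Subgroup.zpowers c ⊔ Subgroup.zpowers z →
        Nat.card C = p → Nat.card C' = p →
        C ≠ Subgroup.zpowers z → C' ≠ Subgroup.zpowers z →
        ∃ g : G, Subgroup.map (MulAut.conj g).toMonoidHom C = C' :=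
  conj_relation_and_conjugacy_in_CZ_general p G z a c hz hzord hcord hcomm
end
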